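/- Let p be a prime number and let L and D be monic differential operators of MUM type of order n with coefficients in ℚ_p[[z]], with companion matrices A and B respectively. Let (f, g) be the canonical solution pair of L and (f_1, g_1) the canonical solution pair of D. Suppose H = (h_{i,j})_{1≤i,j≤n} ∈ M_n(ℚ_p[[z]]) satisfies δH = A·H − p·H·B(z^p). Set α_0 = h_{1,1}(0), α_1 = h_{1,2}(0), u = g_1/f_1, v = g/f, and for 2 ≤ j ≤ n set r_j = Σ_{i=j}^{n} binom(i−1, i−j)·h_{1,i}·(δ^{i−j} f_1)(z^p). Then: (i) Σ_{i=1}^{n} h_{1,i}·(δ^{i−1} f_1)(z^p) = α_0·f; and (ii) α_0·f·u(z^p) + r_2·(1 + (δu)(z^p)) + Σ_{j=3}^{n} r_j·(δ^{j−1} u)(z^p) = f·(p·α_0·v + α_1). (Identity (ii) expresses, with ω̃ = Log z + u and ω = Log z + v, the relation ω̃(z^p)·α_0·f + Σ_{j=2}^{n} (δ^{j−1}ω̃)(z^p)·r_j = f·(p·α_0·ω + α_1) after cancelling the Log z terms.) -/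

import Mathlib

open PowerSeries

noncomputable section

/-- The derivation `δ = z d/dz` on power series: `δ(Σ aₙ zⁿ) = Σ n aₙ zⁿ`. -/
def deltaOp {K : Type*} [Semiring K] (f : PowerSeries K) : PowerSeries K :=
  PowerSeries.mk fun k => (k : K) * PowerSeries.coeff (R := K) k f

/-- Substitution `z ↦ z^m` on power series. -/
def substPow {K : Type*} [Semiring K] (m : ℕ) (f : PowerSeries K) : PowerSeries K :=
  PowerSeries.mk fun k => if k % m = 0 then PowerSeries.coeff (R := K) (k / m) f else 0

/-- The Cartier operator `Λ_m : Σ aᵢ zⁱ ↦ Σ a_{im} zⁱ`. -/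
def cartier {K : Type*} [Semiring K] (m : ℕ) (f : PowerSeries K) : PowerSeries K :=
  PowerSeries.mk fun k => PowerSeries.coeff (R := K) (k * m) f

/-- The action of the monic operator `L = δ^n + Σ_{i<n} aᵢ δ^i` on a power series. -/
def applyOp {K : Type*} [Semiring K] {n : ℕ} (a : Fin n → PowerSeries K)
    (y : PowerSeries K) : PowerSeries K :=
  deltaOp^[n] y + ∑ i : Fin n, a i * deltaOp^[(i : ℕ)] y

/-- `L⁽¹⁾ = Σ_{k=1}^{n} k·a_k·δ^{k−1}`, with `a_n = 1`. -/
def applyOp1 {K : Type*} [Semiring K] {n : ℕ} (a : Fin n → PowerSeries K)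
    (y : PowerSeries K) : PowerSeries K :=
  (n : K) • deltaOp^[n - 1] y + ∑ i : Fin n, ((i : ℕ) : K) • (a i * deltaOp^[(i : ℕ) - 1] y)

/-- Companion matrix of the monic operator `δ^n + Σ_{i<n} aᵢ δ^i`. -/
def companionM {K : Type*} [Ring K] {n : ℕ} (a : Fin n → PowerSeries K) :
    Matrix (Fin n) (Fin n) (PowerSeries K) :=
  Matrix.of fun i j =>
    if (i : ℕ) + 1 = n then -a j else if (j : ℕ) = (i : ℕ) + 1 then 1 else 0

/-- Evaluation of a matrix of power series at `z = 0` (entrywise constant term,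
viewed again as constant power series). -/
def evalZero {K : Type*} [Semiring K] {n : ℕ} (M : Matrix (Fin n) (Fin n) (PowerSeries K)) :
    Matrix (Fin n) (Fin n) (PowerSeries K) :=
  M.map fun f => PowerSeries.C (R := K) (PowerSeries.constantCoeff (R := K) f)

/-- The sequence `A_0 = I`, `A_{j+1} = δA_j + A_j (A − jI)`. -/
def Aseq {K : Type*} [CommRing K] {n : ℕ} (A : Matrix (Fin n) (Fin n) (PowerSeries K)) :
    ℕ → Matrix (Fin n) (Fin n) (PowerSeries K)
  | 0 => 1
  | j + 1 => (Aseq A j).map deltaOp +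
      Aseq A j * (A - (j : K) • (1 : Matrix (Fin n) (Fin n) (PowerSeries K)))

/-- `r(L) ≥ 1`: for every real `0 < r < 1`, `‖A_j/j!‖·r^j → 0` as `j → ∞`,
where `‖·‖` is the (entrywise supremum of the) Gauss norm. -/
def RadiusGE1 {K : Type*} [NormedField K] {n : ℕ}
    (A : Matrix (Fin n) (Fin n) (PowerSeries K)) : Prop :=
  ∀ r : ℝ, 0 < r → r < 1 → ∀ ε : ℝ, 0 < ε → ∃ J : ℕ, ∀ j : ℕ, J ≤ j →
    ∀ i i' : Fin n, ∀ k : ℕ,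
      ‖PowerSeries.coeff (R := K) k (Aseq A j i i')‖ * ‖((j.factorial : K))⁻¹‖ * r ^ j < ε

/-- A `p`-integral Frobenius structure for the monic operator with coefficients `a`:
a matrix `Φ ∈ Mₙ(ℤ_p[[z]])` with `det Φ ≠ 0` and `δΦ = AΦ − pΦA(z^p)`. -/
def IsPIntFrob (p : ℕ) [Fact p.Prime] {n : ℕ} (a : Fin n → PowerSeries ℚ_[p])
    (Φ : Matrix (Fin n) (Fin n) (PowerSeries ℚ_[p])) : Prop :=
  (∀ i j : Fin n, ∀ k : ℕ, ‖PowerSeries.coeff (R := ℚ_[p]) k (Φ i j)‖ ≤ 1) ∧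
  Φ.det ≠ 0 ∧
  Φ.map deltaOp =
    companionM a * Φ - (p : ℚ_[p]) • (Φ * (companionM a).map (substPow p))

/-- `exp(h) = Σ_j h^j / j!` (intended for `h` with zero constant term). -/
def psExp {K : Type*} [Field K] (h : PowerSeries K) : PowerSeries K :=
  PowerSeries.mk fun k =>
    ∑ j ∈ Finset.range (k + 1), PowerSeries.coeff (R := K) k (h ^ j) / (j.factorial : K)

/-- `(f, g)` is the canonical solution pair of the MUM operator with coefficients `a`:
`f ∈ 1 + z K[[z]]`, `g ∈ z K[[z]]`, `L(f) = 0` and `L(g) + L⁽¹⁾(f) = 0`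
(equivalently, `f` and `f·Log z + g` are solutions of `L`). -/
def IsCanonicalPair {K : Type*} [Field K] {n : ℕ} (a : Fin n → PowerSeries K)
    (f g : PowerSeries K) : Prop :=
  PowerSeries.constantCoeff (R := K) f = 1 ∧ PowerSeries.constantCoeff (R := K) g = 0 ∧
  applyOp a f = 0 ∧ applyOp a g + applyOp1 a f = 0

end

/-!
Let `Y = (δ^i f₁)ᵢ` be the Wronskian vector of `f₁` and `Y'` the `Log z`-free part of the
Wronskian vector of `f₁ Log z + g₁`, so that `δY = BY` and `δY' = BY' - Y`. The Frobenius equation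
for `H` turns these into `δ(H Y(z^p)) = A H Y(z^p)` and `δ(H Y'(z^p)) = A H Y'(z^p) - p H Y(z^p)`.
A vector `W` with `δW = AW - (δ^i G)ᵢ` is the `Log z`-free Wronskian vector of its first entry `W₀`,
and `L W₀ + L⁽¹⁾ G = 0`; since power series solutions of a MUM operator are determined by their
constant terms, the first entries of `H Y(z^p)` and `H Y'(z^p)` are `α₀ f` and `p α₀ g + α₁ f`.
The first is (i); expanding `δ^i (u f₁)` by the Leibniz rule in the second and regrouping by
`δ^j u` gives (ii).
-/

open Matrix

noncomputable section

section Delta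

variable {K : Type*} [CommRing K]

@[simp]
lemma coeff_deltaOp (k : ℕ) (f : K⟦X⟧) : coeff k (deltaOp f) = k * coeff k f := by
  simp [deltaOp]

@[simp]
lemma coeff_deltaOp_iterate (m k : ℕ) (f : K⟦X⟧) :
    coeff k (deltaOp^[m] f) = (k : K) ^ m * coeff k f := by
  induction m with
  | zero => simp
  | succ m ih => rw [Function.iterate_succ_apply', coeff_deltaOp, ih]; ring

@[simp]
lemma constantCoeff_deltaOp (f : K⟦X⟧) : constantCoeff (deltaOp f) = 0 := by
  simp [← coeff_zero_eq_constantCoeff]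

lemma constantCoeff_deltaOp_iterate {m : ℕ} (hm : m ≠ 0) (f : K⟦X⟧) :
    constantCoeff (deltaOp^[m] f) = 0 := by
  simp [← coeff_zero_eq_constantCoeff, hm]

lemma deltaOp_sum {ι : Type*} (s : Finset ι) (F : ι → K⟦X⟧) :
    deltaOp (∑ i ∈ s, F i) = ∑ i ∈ s, deltaOp (F i) := by
  ext k; simp [Finset.mul_sum]

lemma deltaOp_mul (f g : K⟦X⟧) : deltaOp (f * g) = deltaOp f * g + f * deltaOp g := by
  ext k
  simp only [coeff_deltaOp, map_add, coeff_mul, Finset.mul_sum, ← Finset.sum_add_distrib]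
  refine Finset.sum_congr rfl fun x hx => ?_
  rw [← Finset.HasAntidiagonal.mem_antidiagonal.mp hx, Nat.cast_add]
  ring

lemma deltaOp_iterate_add (m : ℕ) (f g : K⟦X⟧) :
    deltaOp^[m] (f + g) = deltaOp^[m] f + deltaOp^[m] g := by
  ext k; simp [mul_add]

lemma deltaOp_iterate_sub (m : ℕ) (f g : K⟦X⟧) :
    deltaOp^[m] (f - g) = deltaOp^[m] f - deltaOp^[m] g := by
  ext k; simp [mul_sub]

lemma deltaOp_iterate_smul (m : ℕ) (c : K) (f : K⟦X⟧) :
    deltaOp^[m] (c • f) = c • deltaOp^[m] f := by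
  ext k; simp [mul_left_comm]

lemma deltaOp_iterate_zero (m : ℕ) : deltaOp^[m] (0 : K⟦X⟧) = 0 := by
  ext k; simp

lemma deltaOp_iterate_mul (m : ℕ) (f g : K⟦X⟧) :
    deltaOp^[m] (f * g) =
      ∑ j ∈ Finset.range (m + 1), (m.choose j : K) • (deltaOp^[j] f * deltaOp^[m - j] g) := by
  ext k
  simp only [coeff_deltaOp_iterate, coeff_mul, map_sum, map_smul, smul_eq_mul, Finset.mul_sum]
  rw [Finset.sum_comm]
  refine Finset.sum_congr rfl fun x hx => ?_
  rw [← Finset.HasAntidiagonal.mem_antidiagonal.mp hx, Nat.cast_add, add_pow, Finset.sum_mul]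
  refine Finset.sum_congr rfl fun j _ => ?_
  ring

lemma substPow_eq_expand {p : ℕ} (hp : p ≠ 0) :
    substPow p = ⇑(expand p hp : K⟦X⟧ →ₐ[K] K⟦X⟧) := by
  ext f k
  simp [substPow, coeff_expand, Nat.dvd_iff_mod_eq_zero]

lemma deltaOp_expand {p : ℕ} (hp : p ≠ 0) (f : K⟦X⟧) :
    deltaOp (expand p hp f) = (p : K) • expand p hp (deltaOp f) := by
  ext k
  simp only [coeff_deltaOp, coeff_expand, map_smul, smul_eq_mul]
  split_ifs with h
  · obtain ⟨m, rfl⟩ := h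
    simp [Nat.mul_div_cancel_left _ (Nat.pos_of_ne_zero hp)]
    ring
  · simp

end Delta

section Operator

variable {K : Type*} [CommRing K] {n : ℕ} (a : Fin n → K⟦X⟧)

lemma applyOp_add (y z : K⟦X⟧) : applyOp a (y + z) = applyOp a y + applyOp a z := by
  simp only [applyOp, deltaOp_iterate_add, mul_add, Finset.sum_add_distrib]
  abel

lemma applyOp_sub (y z : K⟦X⟧) : applyOp a (y - z) = applyOp a y - applyOp a z := by
  simp only [applyOp, deltaOp_iterate_sub, mul_sub, Finset.sum_sub_distrib]
  abel

lemma applyOp_smul (c : K) (y : K⟦X⟧) : applyOp a (c • y) = c • applyOp a y := by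
  simp only [applyOp, deltaOp_iterate_smul, mul_smul_comm, smul_add, Finset.smul_sum]

lemma applyOp1_smul (c : K) (y : K⟦X⟧) : applyOp1 a (c • y) = c • applyOp1 a y := by
  simp only [applyOp1, deltaOp_iterate_smul, mul_smul_comm, smul_add, Finset.smul_sum,
    smul_comm c]

lemma applyOp1_zero : applyOp1 a 0 = 0 := by
  simp [applyOp1, deltaOp_iterate_zero]

variable [IsDomain K] [CharZero K]

/-- The indicial polynomial of a MUM operator is `T ^ n`: for `k ≥ 1` the `k`-th coefficient of
`L y` is `k ^ n` times that of `y` plus terms in the lower coefficients of `y`. -/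
lemma eq_zero_of_applyOp_eq_zero (hn : n ≠ 0) (ha : ∀ i, constantCoeff (a i) = 0) {y : K⟦X⟧}
    (hy : applyOp a y = 0) (hy0 : constantCoeff y = 0) : y = 0 := by
  ext k
  induction k using Nat.strong_induction_on with
  | _ k ih =>
    rcases Nat.eq_zero_or_pos k with rfl | hk
    · simpa using hy0
    have hlower : ∑ i : Fin n, coeff k (a i * deltaOp^[i] y) = 0 := by
      refine Finset.sum_eq_zero fun i _ => ?_
      rw [coeff_mul]
      refine Finset.sum_eq_zero fun x hx => ?_
      rw [Finset.HasAntidiagonal.mem_antidiagonal] at hx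
      rcases Nat.eq_zero_or_pos x.1 with h1 | h1
      · rw [h1, coeff_zero_eq_constantCoeff_apply, ha, zero_mul]
      · rw [coeff_deltaOp_iterate, ih x.2 (by omega), map_zero, mul_zero, mul_zero]
    have hk : coeff k (applyOp a y) = (k : K) ^ n * coeff k y := by
      rw [applyOp, map_add, map_sum, hlower, add_zero, coeff_deltaOp_iterate]
    rw [hy, map_zero, eq_comm, mul_eq_zero] at hk
    simpa [hn, Nat.pos_iff_ne_zero.mp ‹0 < k›] using hk

lemma eq_of_applyOp_eq (hn : n ≠ 0) (ha : ∀ i, constantCoeff (a i) = 0) {y z : K⟦X⟧}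
    (h : applyOp a y = applyOp a z) (h0 : constantCoeff y = constantCoeff z) : y = z :=
  sub_eq_zero.mp <| eq_zero_of_applyOp_eq_zero a hn ha (by rw [applyOp_sub, h, sub_self])
    (by rw [map_sub, h0, sub_self])

end Operator

section Companion

variable {K : Type*} [CommRing K] {n : ℕ}

def wronskVec (n : ℕ) (y : K⟦X⟧) : Fin n → K⟦X⟧ := fun i => deltaOp^[i] y

/-- The `Log z`-free part of `δ^k (f · Log z + g)`. -/
def logWronsk (f g : K⟦X⟧) (k : ℕ) : K⟦X⟧ := deltaOp^[k] g + (k : K) • deltaOp^[k - 1] f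

def logWronskVec (n : ℕ) (f g : K⟦X⟧) : Fin n → K⟦X⟧ := fun i => logWronsk f g i

lemma logWronskVec_zero_left (y : K⟦X⟧) : logWronskVec n 0 y = wronskVec n y := by
  ext1 i; simp [logWronskVec, logWronsk, wronskVec, deltaOp_iterate_zero]

lemma wronskVec_zero : wronskVec n (0 : K⟦X⟧) = 0 := by
  ext1 i; simp [wronskVec, deltaOp_iterate_zero]

lemma smul_wronskVec (c : K) (y : K⟦X⟧) : c • wronskVec n y = wronskVec n (c • y) := by
  ext1 i; simp [wronskVec, deltaOp_iterate_smul]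

lemma deltaOp_logWronsk (f g : K⟦X⟧) (k : ℕ) :
    deltaOp (logWronsk f g k) = logWronsk f g (k + 1) - deltaOp^[k] f := by
  ext j
  cases k <;> simp [logWronsk]; ring

lemma companionM_mulVec_of_lt (a v : Fin n → K⟦X⟧) (i : Fin n) (hi : (i : ℕ) + 1 < n) :
    (companionM a *ᵥ v) i = v ⟨i + 1, hi⟩ := by
  rw [mulVec, dotProduct, Fintype.sum_eq_single ⟨i + 1, hi⟩]
  · simp [companionM, hi.ne]
  · intro j hj
    simp only [companionM, of_apply, hi.ne, if_false]
    rw [if_neg fun h => hj (Fin.ext h), zero_mul]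

lemma companionM_mulVec_last (a v : Fin n → K⟦X⟧) (i : Fin n) (hi : (i : ℕ) + 1 = n) :
    (companionM a *ᵥ v) i = -∑ j, a j * v j := by
  simp [mulVec, dotProduct, companionM, hi]

/-- The first `n - 1` rows of the system hold for all `f, g`; the last one is
`L g + L⁽¹⁾ f = 0`. -/
lemma deltaOp_comp_logWronskVec_iff (hn : 0 < n) (a : Fin n → K⟦X⟧) (f g : K⟦X⟧) :
    deltaOp ∘ logWronskVec n f g = companionM a *ᵥ logWronskVec n f g - wronskVec n f ↔
      applyOp a g + applyOp1 a f = 0 := by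
  set last : Fin n := ⟨n - 1, by omega⟩
  have hlast : deltaOp (logWronskVec n f g last) -
      ((companionM a *ᵥ logWronskVec n f g) last - wronskVec n f last) =
        applyOp a g + applyOp1 a f := by
    rw [companionM_mulVec_last a _ last (by simp only [last]; omega)]
    simp only [logWronskVec, wronskVec, last]
    rw [deltaOp_logWronsk, Nat.sub_add_cancel hn]
    simp only [logWronsk, applyOp, applyOp1, mul_add, Finset.sum_add_distrib, mul_smul_comm]
    abel
  rw [← hlast, sub_eq_zero, funext_iff]
  refine ⟨fun h => h last, fun h i => ?_⟩
  by_cases hi : (i : ℕ) + 1 < n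
  · rw [Function.comp_apply, Pi.sub_apply, companionM_mulVec_of_lt a _ i hi]
    simp [logWronskVec, wronskVec, deltaOp_logWronsk]
  · obtain rfl : i = last := Fin.ext (by simp only [last]; omega)
    exact h

lemma eq_logWronskVec_of_deltaOp_comp (hn : 0 < n) (a W : Fin n → K⟦X⟧) (f : K⟦X⟧)
    (hW : deltaOp ∘ W = companionM a *ᵥ W - wronskVec n f) :
    W = logWronskVec n f (W ⟨0, hn⟩) := by
  suffices h : ∀ k (hk : k < n), W ⟨k, hk⟩ = logWronsk f (W ⟨0, hn⟩) k from
    funext fun i => h i i.isLt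
  intro k
  induction k with
  | zero => intro hk; simp [logWronsk]
  | succ k ih =>
    intro hk
    have hrow := congrFun hW ⟨k, by omega⟩
    simp only [Function.comp_apply, Pi.sub_apply, companionM_mulVec_of_lt a W ⟨k, _⟩ hk] at hrow
    rw [eq_add_of_sub_eq hrow.symm, ih, deltaOp_logWronsk, wronskVec, sub_add_cancel]

lemma applyOp_add_applyOp1_of_deltaOp_comp (hn : 0 < n) (a W : Fin n → K⟦X⟧) (f : K⟦X⟧)
    (hW : deltaOp ∘ W = companionM a *ᵥ W - wronskVec n f) :
    applyOp a (W ⟨0, hn⟩) + applyOp1 a f = 0 := by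
  rwa [eq_logWronskVec_of_deltaOp_comp hn a W f hW, deltaOp_comp_logWronskVec_iff hn] at hW

lemma deltaOp_comp_wronskVec (hn : 0 < n) (a : Fin n → K⟦X⟧) {y : K⟦X⟧}
    (hy : applyOp a y = 0) : deltaOp ∘ wronskVec n y = companionM a *ᵥ wronskVec n y := by
  have h := (deltaOp_comp_logWronskVec_iff hn a 0 y).mpr (by rw [applyOp1_zero, hy, add_zero])
  rwa [logWronskVec_zero_left, wronskVec_zero, sub_zero] at h

lemma eq_wronskVec_of_deltaOp_comp (hn : 0 < n) (a W : Fin n → K⟦X⟧)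
    (hW : deltaOp ∘ W = companionM a *ᵥ W) :
    W = wronskVec n (W ⟨0, hn⟩) ∧ applyOp a (W ⟨0, hn⟩) = 0 := by
  rw [← sub_zero (companionM a *ᵥ W), ← wronskVec_zero (K := K)] at hW
  refine ⟨(eq_logWronskVec_of_deltaOp_comp hn a W 0 hW).trans (logWronskVec_zero_left _), ?_⟩
  simpa [applyOp1_zero] using applyOp_add_applyOp1_of_deltaOp_comp hn a W 0 hW

lemma deltaOp_comp_mulVec (M : Matrix (Fin n) (Fin n) K⟦X⟧) (v : Fin n → K⟦X⟧) :
    deltaOp ∘ (M *ᵥ v) = M.map deltaOp *ᵥ v + M *ᵥ (deltaOp ∘ v) := by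
  ext1 i
  simp [mulVec, dotProduct, deltaOp_sum, deltaOp_mul, Finset.sum_add_distrib]

theorem deltaOp_comp_mulVec_expand {p : ℕ} (hp : p ≠ 0) {A B H : Matrix (Fin n) (Fin n) K⟦X⟧}
    (hH : H.map deltaOp = A * H - (p : K) • (H * B.map (expand p hp)))
    {Y E : Fin n → K⟦X⟧} (hY : deltaOp ∘ Y = B *ᵥ Y - E) :
    deltaOp ∘ (H *ᵥ (expand p hp ∘ Y)) =
      A *ᵥ (H *ᵥ (expand p hp ∘ Y)) - (p : K) • (H *ᵥ (expand p hp ∘ E)) := by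
  have hexp : deltaOp ∘ (expand p hp ∘ Y) =
      (p : K) • (B.map (expand p hp) *ᵥ (expand p hp ∘ Y) - expand p hp ∘ E) := by
    ext1 i
    have hmul : expand p hp ((B *ᵥ Y) i) = (B.map (expand p hp) *ᵥ (expand p hp ∘ Y)) i :=
      (expand p hp).toRingHom.map_mulVec B Y i
    have hrow : deltaOp (Y i) = (B *ᵥ Y) i - E i := congrFun hY i
    simp only [Function.comp_apply, Pi.smul_apply, Pi.sub_apply]
    rw [deltaOp_expand, hrow, map_sub, hmul]
  rw [deltaOp_comp_mulVec, hH, hexp]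
  simp only [sub_mulVec, smul_mulVec, mulVec_mulVec, mulVec_smul, mulVec_sub]
  rw [smul_sub]
  abel

lemma constantCoeff_mulVec_expand_wronskVec {p : ℕ} (hp : p ≠ 0) (hn : 0 < n)
    (H : Matrix (Fin n) (Fin n) K⟦X⟧) (y : K⟦X⟧) (i : Fin n) :
    constantCoeff ((H *ᵥ (expand p hp ∘ wronskVec n y)) i) =
      constantCoeff (H i ⟨0, hn⟩) * constantCoeff y := by
  rw [mulVec, dotProduct, map_sum, Fintype.sum_eq_single ⟨0, hn⟩]
  · simp [wronskVec]
  · intro j hj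
    simp [wronskVec, constantCoeff_deltaOp_iterate (fun h => hj (Fin.ext h))]

lemma constantCoeff_mulVec_expand_logWronskVec {p : ℕ} (hp : p ≠ 0) (hn : 1 < n)
    (H : Matrix (Fin n) (Fin n) K⟦X⟧) (f g : K⟦X⟧) (i : Fin n) :
    constantCoeff ((H *ᵥ (expand p hp ∘ logWronskVec n f g)) i) =
      constantCoeff (H i ⟨0, by omega⟩) * constantCoeff g +
        constantCoeff (H i ⟨1, hn⟩) * constantCoeff f := by
  rw [mulVec, dotProduct, map_sum,
    Fintype.sum_eq_add ⟨0, by omega⟩ ⟨1, hn⟩ (by simp [Fin.ext_iff])]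
  · simp [logWronskVec, logWronsk]
  · rintro j ⟨hj0, hj1⟩
    have hj0 : (j : ℕ) ≠ 0 := fun h => hj0 (Fin.ext h)
    have hj1 : (j : ℕ) - 1 ≠ 0 := by
      have : (j : ℕ) ≠ 1 := fun h => hj1 (Fin.ext h)
      omega
    simp [logWronskVec, logWronsk, constantCoeff_deltaOp_iterate hj0,
      constantCoeff_deltaOp_iterate hj1]

end Companion

section Regroup

variable {K : Type*} [CommRing K] {n : ℕ}

/-- The paper's `r_j` (1-based `j`), for the row `h` of `H` and `F k = (δ^k f₁)(z^p)`. -/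
def leibnizCoeff (h : Fin n → K⟦X⟧) (F : ℕ → K⟦X⟧) (j : ℕ) : K⟦X⟧ :=
  ∑ i : Fin n, if j ≤ (i : ℕ) + 1 then
    ((i : ℕ).choose ((i : ℕ) + 1 - j) : K) • (h i * F ((i : ℕ) + 1 - j)) else 0

lemma leibnizCoeff_one (h : Fin n → K⟦X⟧) (F : ℕ → K⟦X⟧) :
    leibnizCoeff h F 1 = ∑ i : Fin n, h i * F i := by
  simp [leibnizCoeff]

lemma leibnizCoeff_two (h : Fin n → K⟦X⟧) (F : ℕ → K⟦X⟧) :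
    leibnizCoeff h F 2 = ∑ i : Fin n, h i * ((i : K) • F (i - 1)) := by
  refine Finset.sum_congr rfl fun i _ => ?_
  rcases Nat.eq_zero_or_pos (i : ℕ) with hi | hi
  · simp [hi]
  · rw [if_pos (by omega), show (i : ℕ) + 1 - 2 = i - 1 by omega,
      Nat.choose_symm_of_eq_add (show (i : ℕ) = (i - 1) + 1 by omega), Nat.choose_one_right,
      mul_smul_comm]

lemma sum_mul_sum_choose_eq_sum_leibnizCoeff (h : Fin n → K⟦X⟧) (U F : ℕ → K⟦X⟧) :
    ∑ i : Fin n, h i * ∑ j ∈ Finset.range (i + 1), ((i : ℕ).choose j : K) • (U j * F (i - j)) =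
      ∑ j ∈ Finset.range n, leibnizCoeff h F (j + 1) * U j := by
  have hterm : ∀ i : Fin n, h i * ∑ j ∈ Finset.range (i + 1),
      ((i : ℕ).choose j : K) • (U j * F (i - j)) =
        ∑ j ∈ Finset.range n, (if j + 1 ≤ (i : ℕ) + 1 then
          ((i : ℕ).choose ((i : ℕ) + 1 - (j + 1)) : K) • (h i * F ((i : ℕ) + 1 - (j + 1)))
            else 0) * U j := by
    intro i
    rw [Finset.mul_sum]
    refine Finset.sum_subset_zero_on_sdiff (Finset.range_subset_range.mpr i.isLt) ?_ ?_
    · intro j hj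
      rw [Finset.mem_sdiff, Finset.mem_range, Finset.mem_range] at hj
      rw [if_neg (by omega), zero_mul]
    · intro j hj
      rw [Finset.mem_range] at hj
      rw [if_pos (by omega), Nat.add_sub_add_right, Nat.choose_symm (by omega), smul_mul_assoc,
        mul_smul_comm, mul_assoc, mul_comm (U j)]
  simp only [leibnizCoeff, Finset.sum_mul, Finset.sum_congr rfl fun i _ => hterm i]
  exact Finset.sum_comm

lemma sum_range_succ_eq_add_add_sum_Icc {M : Type*} [AddCommMonoid M] (hn : 2 ≤ n)
    (a : ℕ → M) : ∑ j ∈ Finset.range n, a (j + 1) = a 1 + a 2 + ∑ j ∈ Finset.Icc 3 n, a j := by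
  obtain ⟨m, rfl⟩ := Nat.exists_eq_add_of_le' hn
  rw [Finset.sum_range_succ', Finset.sum_range_succ', ← Finset.Ico_add_one_right_eq_Icc,
    Finset.sum_Ico_eq_sum_range, show m + 2 + 1 - 3 = m by omega]
  simp only [show ∀ j, j + 1 + 1 + 1 = 3 + j by omega]
  abel

lemma mulVec_expand_logWronskVec_mul {p : ℕ} (hp : p ≠ 0) (hn : 2 ≤ n)
    (H : Matrix (Fin n) (Fin n) K⟦X⟧) (u f : K⟦X⟧) (i : Fin n) {r : ℕ → K⟦X⟧}
    (hr : r = leibnizCoeff (H i) (fun k => expand p hp (deltaOp^[k] f))) :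
    (H *ᵥ (expand p hp ∘ logWronskVec n f (u * f))) i =
      r 1 * expand p hp u + r 2 * (1 + expand p hp (deltaOp u)) +
        ∑ j ∈ Finset.Icc 3 n, r j * expand p hp (deltaOp^[j - 1] u) := by
  have hsplit := sum_range_succ_eq_add_add_sum_Icc hn
    (fun j => r j * expand p hp (deltaOp^[j - 1] u))
  simp only [Nat.add_sub_cancel, Nat.sub_self, Nat.reduceSub, Function.iterate_zero,
    Function.iterate_one, id] at hsplit
  have hleibniz : (H *ᵥ (expand p hp ∘ logWronskVec n f (u * f))) i =
      ∑ j ∈ Finset.range n, r (j + 1) * expand p hp (deltaOp^[j] u) + r 2 := by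
    rw [mulVec, dotProduct, hr,
      ← sum_mul_sum_choose_eq_sum_leibnizCoeff _ (fun j => expand p hp (deltaOp^[j] u)),
      leibnizCoeff_two, ← Finset.sum_add_distrib]
    refine Finset.sum_congr rfl fun j _ => ?_
    simp [logWronskVec, logWronsk, deltaOp_iterate_mul, mul_add]
  rw [hleibniz]
  linear_combination hsplit

end Regroup

section Frobenius

variable {K : Type*} [Field K] [CharZero K] {n p : ℕ} {a b : Fin n → K⟦X⟧}
  {H : Matrix (Fin n) (Fin n) K⟦X⟧}

theorem mulVec_expand_wronskVec_eq (hp : p ≠ 0) (hn : 0 < n) (ha : ∀ i, constantCoeff (a i) = 0)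
    (hH : H.map deltaOp = companionM a * H - (p : K) • (H * (companionM b).map (expand p hp)))
    {f f₁ : K⟦X⟧} (hf : applyOp a f = 0) (hf0 : constantCoeff f = 1) (hf₁ : applyOp b f₁ = 0)
    (hf₁0 : constantCoeff f₁ = 1) :
    H *ᵥ (expand p hp ∘ wronskVec n f₁) =
      wronskVec n (constantCoeff (H ⟨0, hn⟩ ⟨0, hn⟩) • f) := by
  have hY : deltaOp ∘ wronskVec n f₁ = companionM b *ᵥ wronskVec n f₁ - 0 := by
    rw [sub_zero]; exact deltaOp_comp_wronskVec hn b hf₁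
  have hW := deltaOp_comp_mulVec_expand hp hH hY
  rw [show expand p hp ∘ (0 : Fin n → K⟦X⟧) = 0 by ext1; simp, mulVec_zero, smul_zero,
    sub_zero] at hW
  obtain ⟨hWw, hLW⟩ := eq_wronskVec_of_deltaOp_comp hn _ _ hW
  rw [hWw]
  congr 1
  refine eq_of_applyOp_eq a hn.ne' ha (by rw [hLW, applyOp_smul, hf, smul_zero]) ?_
  rw [constantCoeff_mulVec_expand_wronskVec hp hn]
  simp [hf₁0, hf0]

theorem mulVec_expand_logWronskVec_apply_zero (hp : p ≠ 0) (hn : 1 < n)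
    (ha : ∀ i, constantCoeff (a i) = 0)
    (hH : H.map deltaOp = companionM a * H - (p : K) • (H * (companionM b).map (expand p hp)))
    {f g f₁ g₁ : K⟦X⟧} (hfg : IsCanonicalPair a f g) (hfg₁ : IsCanonicalPair b f₁ g₁) :
    (H *ᵥ (expand p hp ∘ logWronskVec n f₁ g₁)) ⟨0, by omega⟩ =
      ((p : K) * constantCoeff (H ⟨0, by omega⟩ ⟨0, by omega⟩)) • g +
        constantCoeff (H ⟨0, by omega⟩ ⟨1, hn⟩) • f := by
  obtain ⟨hf0, hg0, hLf, hLg⟩ := hfg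
  obtain ⟨hf₁0, hg₁0, hDf₁, hDg₁⟩ := hfg₁
  have hY := (deltaOp_comp_logWronskVec_iff (by omega) b f₁ g₁).mpr hDg₁
  have hW := deltaOp_comp_mulVec_expand hp hH hY
  rw [mulVec_expand_wronskVec_eq hp (by omega) ha hH hLf hf0 hDf₁ hf₁0, smul_wronskVec,
    smul_smul] at hW
  have hLW := applyOp_add_applyOp1_of_deltaOp_comp (by omega) _ _ _ hW
  refine eq_of_applyOp_eq a (by omega) ha ?_ ?_
  · rw [applyOp1_smul] at hLW
    rw [applyOp_add, applyOp_smul, applyOp_smul, hLf, smul_zero, add_zero]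
    linear_combination (norm := module) hLW -
      ((p : K) * constantCoeff (H ⟨0, by omega⟩ ⟨0, by omega⟩)) • hLg
  · rw [constantCoeff_mulVec_expand_logWronskVec hp hn]
    simp [hf₁0, hg₁0, hf0, hg0]

end Frobenius

end

/-- the key intertwining identity. With `δH = A·H − p·H·B(z^p)`,
`α₀ = h_{1,1}(0)`, `α₁ = h_{1,2}(0)`, `u = g₁/f₁`, `v = g/f`, and
`r_j = Σ_{i=j}^{n} C(i−1, i−j)·h_{1,i}·(δ^{i−j} f₁)(z^p)`:
(i) `Σ_{i=1}^{n} h_{1,i}·(δ^{i−1} f₁)(z^p) = α₀·f`;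
(ii) `α₀·f·u(z^p) + r₂·(1 + (δu)(z^p)) + Σ_{j=3}^{n} r_j·(δ^{j−1}u)(z^p)
      = f·(p·α₀·v + α₁)`. -/
theorem statement10 (p : ℕ) [Fact p.Prime] (n : ℕ) (hn : 2 ≤ n)
    (a b : Fin n → PowerSeries ℚ_[p])
    -- `L` and `D` are of MUM type
    (haMUM : ∀ i, PowerSeries.constantCoeff (R := ℚ_[p]) (a i) = 0)
    -- `(f, g)` is the canonical solution pair of `L`, `(f₁, g₁)` that of `D`
    (f g f1 g1 : PowerSeries ℚ_[p])
    (hfg : IsCanonicalPair a f g) (hfg1 : IsCanonicalPair b f1 g1)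
    -- `δH = A·H − p·H·B(z^p)`
    (H : Matrix (Fin n) (Fin n) (PowerSeries ℚ_[p]))
    (hH : H.map deltaOp =
      companionM a * H - (p : ℚ_[p]) • (H * (companionM b).map (substPow p))) :
    ∀ α0 α1 : ℚ_[p], ∀ u v : PowerSeries ℚ_[p], ∀ rr : ℕ → PowerSeries ℚ_[p],
      α0 = PowerSeries.constantCoeff (R := ℚ_[p]) (H ⟨0, by omega⟩ ⟨0, by omega⟩) →
      α1 = PowerSeries.constantCoeff (R := ℚ_[p]) (H ⟨0, by omega⟩ ⟨1, by omega⟩) →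
      u = g1 * f1⁻¹ → v = g * f⁻¹ →
      -- `r_j = Σ_{i=j}^{n} C(i−1, i−j)·h_{1,i}·(δ^{i−j} f₁)(z^p)`  (1-based `i`)
      (∀ j : ℕ, rr j = ∑ i : Fin n,
        if j ≤ (i : ℕ) + 1 then
          ((((i : ℕ)).choose ((i : ℕ) + 1 - j) : ℚ_[p])) •
            (H ⟨0, by omega⟩ i * substPow p (deltaOp^[(i : ℕ) + 1 - j] f1))
        else 0) →
      -- (i)
      ((∑ i : Fin n, H ⟨0, by omega⟩ i * substPow p (deltaOp^[(i : ℕ)] f1)) = α0 • f ∧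
      -- (ii)
      α0 • (f * substPow p u) + rr 2 * (1 + substPow p (deltaOp u)) +
          (∑ j ∈ Finset.Icc 3 n, rr j * substPow p (deltaOp^[j - 1] u)) =
        f * (((p : ℚ_[p]) * α0) • v + PowerSeries.C (R := ℚ_[p]) α1)) := by
  rintro α0 α1 u v rr rfl rfl hu hv hrr
  have hp : p ≠ 0 := (Fact.out : p.Prime).ne_zero
  rw [substPow_eq_expand hp] at hH hrr ⊢
  have ⟨hf0, _, hLf, _⟩ := hfg
  have ⟨hf10, _, hDf1, _⟩ := hfg1
  have hpart1 : ∑ i : Fin n, H ⟨0, by omega⟩ i * expand p hp (deltaOp^[(i : ℕ)] f1) =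
      constantCoeff (H ⟨0, by omega⟩ ⟨0, by omega⟩) • f :=
    congrFun (mulVec_expand_wronskVec_eq hp (by omega) haMUM hH hLf hf0 hDf1 hf10) ⟨0, by omega⟩
  refine ⟨hpart1, ?_⟩
  have hr : rr = leibnizCoeff (H ⟨0, by omega⟩) (fun k => expand p hp (deltaOp^[k] f1)) :=
    funext hrr
  have hg1 : g1 = u * f1 := by
    rw [hu, mul_assoc, PowerSeries.inv_mul_cancel _ (by simp [hf10]), mul_one]
  have hr1 : rr 1 = constantCoeff (H ⟨0, by omega⟩ ⟨0, by omega⟩) • f := by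
    rw [hr, leibnizCoeff_one, hpart1]
  have hlog := mulVec_expand_logWronskVec_apply_zero hp hn haMUM hH hfg hfg1
  rw [hg1, mulVec_expand_logWronskVec_mul hp hn H u f1 _ hr, hr1, smul_mul_assoc] at hlog
  rw [hlog, mul_add, mul_smul_comm, hv, mul_left_comm, PowerSeries.mul_inv_cancel _ (by simp [hf0]),
    mul_one, mul_comm f, ← smul_eq_C_mul]
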